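/- arXiv:2410.14190 — 2 statements merged into one kernel-verified Lean document; each statement's English description precedes it below -/
import Mathlib

section
/- For |q|<1, ∑_{n≥0} q^{4n+2} (-q^{2n+6};q^2)_∞ (-q^{2n+2};q^2)_∞ / (q^{2n+1};q^2)_∞^2 = (2q^3(2-q+q^2)/((1+q)(1+q^3)^2)) · (-q^2;q^2)_∞(-q^4;q^2)_∞/(q;q^2)_∞^2 + q^2(1-q)/((1+q)(1+q^3)^2). -/
/-!
Write `P(a) = (a; q²)_∞` and `F n = P(-q^(2n+6)) P(-q^(2n+2)) / P(q^(2n+1))²`. The shift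
`P(a) = (1 - a) P(a q²)` gives `F n = (1 + q^(2n+6)) (1 + q^(2n+2)) / (1 - q^(2n+1))² · F (n+1)`,
and `F n → 1`. The summand telescopes: `q^(4n+2) F n = A n F n - A (n+1) F (n+1)` with
`A n = N(q^(2n)) / ((1 + q)(1 + q³)²)`, where the cubic `N(x)` is the polynomial solution of
`(N(x) - (1 + q)(1 + q³)² q² x²)(1 + q⁶ x)(1 + q² x) = N(q² x)(1 - q x)²`.
Hence the sum is `A 0 F 0 - N(0) / ((1 + q)(1 + q³)²)`, and `P(-q⁴) = (1 + q⁴) P(-q⁶)` turns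
`A 0 F 0` into the first term of the right-hand side.
-/

open scoped BigOperators

open Filter Topology

noncomputable def qPoch (a q : ℂ) (n : ℕ) : ℂ := ∏ j ∈ Finset.range n, (1 - a * q ^ j)

noncomputable def qPochInf (a q : ℂ) : ℂ := ∏' j : ℕ, (1 - a * q ^ j)

section NormedRing

variable {R : Type*} [SeminormedRing R]

lemma norm_pow_lt_one {z : R} (hz : ‖z‖ < 1) {k : ℕ} (hk : k ≠ 0) : ‖z ^ k‖ < 1 :=
  (norm_pow_le' z (Nat.pos_of_ne_zero hk)).trans_lt (pow_lt_one₀ (norm_nonneg z) hz hk)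

variable [NormOneClass R]

lemma one_sub_ne_zero_of_norm_lt_one {z : R} (hz : ‖z‖ < 1) : 1 - z ≠ 0 := by
  rw [sub_ne_zero]
  rintro rfl
  simp at hz

lemma one_add_ne_zero_of_norm_lt_one {z : R} (hz : ‖z‖ < 1) : 1 + z ≠ 0 := by
  simpa using one_sub_ne_zero_of_norm_lt_one (z := -z) (by rwa [norm_neg])

end NormedRing

lemma hasSum_sub_succ_of_tendsto {G : Type*} [AddCommGroup G] [TopologicalSpace G]
    [IsTopologicalAddGroup G] [T2Space G] {g : ℕ → G} {l : G}
    (hs : Summable fun n => g n - g (n + 1)) (hg : Tendsto g atTop (𝓝 l)) :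
    HasSum (fun n => g n - g (n + 1)) (g 0 - l) := by
  rw [hs.hasSum_iff_tendsto_nat]
  simpa only [Finset.sum_range_sub'] using tendsto_const_nhds.sub hg

section QPochhammer

variable {Q : ℂ}

lemma summable_norm_mul_pow (a : ℂ) (hQ : ‖Q‖ < 1) :
    Summable fun j : ℕ => ‖a * Q ^ j‖ := by
  simpa [norm_mul, norm_pow] using
    (summable_geometric_of_lt_one (norm_nonneg Q) hQ).mul_left ‖a‖

lemma multipliable_one_sub_mul_pow (a : ℂ) (hQ : ‖Q‖ < 1) :
    Multipliable fun j : ℕ => 1 - a * Q ^ j := by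
  simpa [sub_eq_add_neg] using
    multipliable_one_add_of_summable (f := fun j : ℕ => -(a * Q ^ j))
      (by simpa only [norm_neg] using summable_norm_mul_pow a hQ)

lemma qPochInf_eq_one_sub_mul (a : ℂ) (hQ : ‖Q‖ < 1) :
    qPochInf a Q = (1 - a) * qPochInf (a * Q) Q := by
  have h := multipliable_one_sub_mul_pow (a * Q) hQ
  simp only [mul_assoc, ← pow_succ'] at h
  unfold qPochInf
  rw [tprod_eq_zero_mul' (f := fun j : ℕ => 1 - a * Q ^ j) h]
  simp only [pow_zero, mul_one, mul_assoc, ← pow_succ']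

lemma tendsto_qPochInf_mul_pow (c : ℂ) (hQ : ‖Q‖ < 1) :
    Tendsto (fun n : ℕ => qPochInf (c * Q ^ n) Q) atTop (𝓝 1) := by
  have hQn : Tendsto (fun n : ℕ => Q ^ n) atTop (𝓝 0) :=
    tendsto_pow_atTop_nhds_zero_of_norm_lt_one hQ
  have := tendsto_tprod_one_add_of_dominated_convergence (𝓕 := atTop)
    (f := fun n j => -(c * Q ^ n * Q ^ j)) (g := fun _ => 0) (summable_norm_mul_pow c hQ)
    (fun j => by simpa using ((hQn.const_mul c).mul_const (Q ^ j)).neg)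
    (Eventually.of_forall fun n j => ?_)
  · simpa [qPochInf, sub_eq_add_neg] using this
  · rw [norm_neg, norm_mul, norm_mul, norm_mul, norm_pow]
    exact mul_le_mul_of_nonneg_right
      (mul_le_of_le_one_right (norm_nonneg c) (pow_le_one₀ (norm_nonneg Q) hQ.le)) (norm_nonneg _)

end QPochhammer

def telescopeNum {R : Type*} [CommRing R] (q x : R) : R :=
  (-q ^ 2 + q ^ 3) + (2 * q ^ 3 - q ^ 4 + q ^ 5 - q ^ 6 + q ^ 7) * x
    + (q ^ 2 + q ^ 3 - q ^ 4 + q ^ 5 + 2 * q ^ 7 - q ^ 8 + q ^ 9) * x ^ 2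
    + (q ^ 6 + q ^ 7 - q ^ 8 + q ^ 9) * x ^ 3

lemma telescopeNum_recurrence {R : Type*} [CommRing R] (q x : R) :
    (telescopeNum q x - (1 + q) * (1 + q ^ 3) ^ 2 * q ^ 2 * x ^ 2) *
        ((1 + q ^ 6 * x) * (1 + q ^ 2 * x)) =
      telescopeNum q (q ^ 2 * x) * (1 - q * x) ^ 2 := by
  unfold telescopeNum
  ring

noncomputable def pochRatio (q : ℂ) (n : ℕ) : ℂ :=
  qPochInf (-q ^ (2 * n + 6)) (q ^ 2) * qPochInf (-q ^ (2 * n + 2)) (q ^ 2) /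
    qPochInf (q ^ (2 * n + 1)) (q ^ 2) ^ 2

noncomputable def telescopeCoeff (q : ℂ) (n : ℕ) : ℂ :=
  telescopeNum q (q ^ (2 * n)) / ((1 + q) * (1 + q ^ 3) ^ 2)

section Telescoping

variable {q : ℂ}

lemma pochRatio_eq_mul_succ (hq : ‖q‖ < 1) (n : ℕ) :
    pochRatio q n = (1 + q ^ (2 * n + 6)) * (1 + q ^ (2 * n + 2)) / (1 - q ^ (2 * n + 1)) ^ 2 *
      pochRatio q (n + 1) := by
  have hQ := norm_pow_lt_one hq two_ne_zero
  have hshift (c : ℂ) (k : ℕ) : qPochInf (c * q ^ (2 * n + k)) (q ^ 2) =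
      (1 - c * q ^ (2 * n + k)) * qPochInf (c * q ^ (2 * (n + 1) + k)) (q ^ 2) := by
    rw [qPochInf_eq_one_sub_mul _ hQ]
    ring_nf
  have h6 := hshift (-1) 6
  have h2 := hshift (-1) 2
  have h1 := hshift 1 1
  simp only [neg_one_mul, one_mul, sub_neg_eq_add] at h6 h2 h1
  rw [pochRatio, pochRatio, h6, h2, h1]
  have := one_sub_ne_zero_of_norm_lt_one (norm_pow_lt_one hq (k := 2 * n + 1) (by omega))
  field_simp

lemma tendsto_pochRatio (hq : ‖q‖ < 1) : Tendsto (pochRatio q) atTop (𝓝 1) := by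
  have hQ := norm_pow_lt_one hq two_ne_zero
  have h (c : ℂ) (k : ℕ) :
      Tendsto (fun n : ℕ => qPochInf (c * q ^ (2 * n + k)) (q ^ 2)) atTop (𝓝 1) := by
    convert tendsto_qPochInf_mul_pow (c * q ^ k) hQ using 3
    ring
  have h6 := h (-1) 6
  have h2 := h (-1) 2
  have h1 := h 1 1
  simp only [neg_one_mul, one_mul] at h6 h2 h1
  convert (h6.mul h2).div (h1.pow 2) (by norm_num) using 2
  · rfl
  · norm_num

lemma tendsto_telescopeCoeff (hq : ‖q‖ < 1) :
    Tendsto (telescopeCoeff q) atTop (𝓝 (telescopeNum q 0 / ((1 + q) * (1 + q ^ 3) ^ 2))) := by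
  have hx : Tendsto (fun n : ℕ => q ^ (2 * n)) atTop (𝓝 0) := by
    simpa only [pow_mul] using
      tendsto_pow_atTop_nhds_zero_of_norm_lt_one (norm_pow_lt_one hq two_ne_zero)
  have hN : Continuous (telescopeNum q) := by
    unfold telescopeNum
    fun_prop
  exact ((hN.tendsto 0).comp hx).div_const _

lemma pow_mul_pochRatio_eq_sub (hq : ‖q‖ < 1) (n : ℕ) :
    q ^ (4 * n + 2) * pochRatio q n =
      telescopeCoeff q n * pochRatio q n - telescopeCoeff q (n + 1) * pochRatio q (n + 1) := by
  have h1 := one_add_ne_zero_of_norm_lt_one hq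
  have h3 := one_add_ne_zero_of_norm_lt_one (norm_pow_lt_one hq three_ne_zero)
  have hn := one_sub_ne_zero_of_norm_lt_one (norm_pow_lt_one hq (k := 2 * n + 1) (by omega))
  have key := telescopeNum_recurrence q (q ^ (2 * n))
  rw [pochRatio_eq_mul_succ hq n, telescopeCoeff, telescopeCoeff,
    show q ^ (2 * (n + 1)) = q ^ 2 * q ^ (2 * n) by ring]
  generalize telescopeNum q (q ^ (2 * n)) = N₀ at key ⊢
  generalize telescopeNum q (q ^ 2 * q ^ (2 * n)) = N₁ at key ⊢
  field_simp
  linear_combination (-pochRatio q (n + 1)) * key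

lemma summable_pow_mul_pochRatio (hq : ‖q‖ < 1) :
    Summable fun n : ℕ => q ^ (4 * n + 2) * pochRatio q n := by
  have hg : Summable fun n : ℕ => q ^ (4 * n + 2) := by
    simpa [pow_add, pow_mul] using
      (summable_geometric_of_norm_lt_one (norm_pow_lt_one hq four_ne_zero)).mul_right (q ^ 2)
  refine summable_of_isBigO_nat' hg ?_
  simpa using (Asymptotics.isBigO_refl (fun n : ℕ => q ^ (4 * n + 2)) atTop).mul
    ((tendsto_pochRatio hq).isBigO_one ℂ)

lemma hasSum_pow_mul_pochRatio (hq : ‖q‖ < 1) :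
    HasSum (fun n : ℕ => q ^ (4 * n + 2) * pochRatio q n)
      (telescopeCoeff q 0 * pochRatio q 0 - telescopeNum q 0 / ((1 + q) * (1 + q ^ 3) ^ 2)) := by
  simp only [pow_mul_pochRatio_eq_sub hq]
  simpa using hasSum_sub_succ_of_tendsto
    ((summable_pow_mul_pochRatio hq).congr (pow_mul_pochRatio_eq_sub hq))
    ((tendsto_telescopeCoeff hq).mul (tendsto_pochRatio hq))

end Telescoping

theorem stmt_14 (q : ℂ) (hq : ‖q‖ < 1) :
    (∑' n : ℕ, q ^ (4 * n + 2) * qPochInf (-q ^ (2 * n + 6)) (q ^ 2) *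
        qPochInf (-q ^ (2 * n + 2)) (q ^ 2) / (qPochInf (q ^ (2 * n + 1)) (q ^ 2)) ^ 2) =
      2 * q ^ 3 * (2 - q + q ^ 2) / ((1 + q) * (1 + q ^ 3) ^ 2) *
        (qPochInf (-q ^ 2) (q ^ 2) * qPochInf (-q ^ 4) (q ^ 2) / (qPochInf q (q ^ 2)) ^ 2) +
        q ^ 2 * (1 - q) / ((1 + q) * (1 + q ^ 3) ^ 2) := by
  have hq4 : qPochInf (-q ^ 4) (q ^ 2) = (1 + q ^ 4) * qPochInf (-q ^ 6) (q ^ 2) := by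
    rw [qPochInf_eq_one_sub_mul _ (norm_pow_lt_one hq two_ne_zero)]
    ring_nf
  have h1 := one_add_ne_zero_of_norm_lt_one hq
  have h3 := one_add_ne_zero_of_norm_lt_one (norm_pow_lt_one hq three_ne_zero)
  refine (tsum_congr fun n => ?_).trans ((hasSum_pow_mul_pochRatio hq).tsum_eq.trans ?_)
  · rw [pochRatio]
    ring
  simp only [pochRatio, telescopeCoeff, telescopeNum, hq4, mul_zero, zero_add, pow_zero, pow_one]
  field_simp
  ring
end

section
/- For |q|<1 and y, z with yz ≠ 0, y ≠ z, yz ≠ q (and the denominators nonzero): ∑_{n≥0} (y;q)_n (q/y;q)_n q^n / ((z;q)_{n+1} (q/z;q)_{n+1}) = 1/(y(1-z/y)(1-q/(yz))) + (y;q)_∞ (q/y;q)_∞ / (z(1-y/z)(1-q/(yz)) (z;q)_∞ (q/z;q)_∞). -/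
open scoped BigOperators

/-! With `T n = (y;q)_n (q/y;q)_n / ((z;q)_n (q/z;q)_n)` and `C = (y - z)(1 - q/(yz))`, the
`n`-th summand equals `(T n - T (n+1)) / C`, because
`(1 - z x)(1 - q x/z) - (1 - y x)(1 - q x/y) = x C` for `x = q^n`.
The series therefore telescopes to `(T 0 - T ∞) / C = (1 - T ∞) / C`, which is the right-hand
side; it converges absolutely since the summands are `O(|q|^n)`. -/

open Filter Topology

theorem multipliable_one_sub_mul_pow_s17 {R : Type*} [NormedCommRing R] [NormOneClass R]
    [CompleteSpace R] (a : R) {q : R} (hq : ‖q‖ < 1) :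
    Multipliable fun j : ℕ => 1 - a * q ^ j := by
  simp_rw [sub_eq_add_neg]
  refine multipliable_one_add_of_summable <|
    ((summable_geometric_of_lt_one (norm_nonneg q) hq).mul_left ‖a‖).of_nonneg_of_le
      (fun _ => norm_nonneg _) fun j => ?_
  rw [norm_neg]
  exact (norm_mul_le _ _).trans (by gcongr; exact norm_pow_le _ _)

theorem summable_mul_pow_of_tendsto {R : Type*} [NormedRing R] [NormOneClass R]
    [CompleteSpace R] {S : ℕ → R} {L : R} (hS : Tendsto S atTop (𝓝 L)) {q : R} (hq : ‖q‖ < 1) :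
    Summable fun n => S n * q ^ n := by
  obtain ⟨M, hM⟩ := hS.norm.bddAbove_range
  refine ((summable_geometric_of_lt_one (norm_nonneg q) hq).mul_left M).of_norm_bounded
    fun n => ?_
  calc ‖S n * q ^ n‖ ≤ ‖S n‖ * ‖q‖ ^ n :=
        (norm_mul_le _ _).trans (by gcongr; exact norm_pow_le _ _)
    _ ≤ M * ‖q‖ ^ n := by gcongr; exact hM ⟨n, rfl⟩

theorem Summable.hasSum_of_eq_sub_succ {G : Type*} [AddCommGroup G] [TopologicalSpace G]
    [IsTopologicalAddGroup G] [T2Space G] {f T : ℕ → G} {L : G} (hf : Summable f)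
    (hfT : ∀ n, f n = T n - T (n + 1)) (hT : Tendsto T atTop (𝓝 L)) : HasSum f (T 0 - L) := by
  have hpartial : Tendsto (fun N => ∑ i ∈ Finset.range N, f i) atTop (𝓝 (T 0 - L)) := by
    simp only [hfT, Finset.sum_range_sub']
    exact tendsto_const_nhds.sub hT
  exact tendsto_nhds_unique hf.hasSum.tendsto_sum_nat hpartial ▸ hf.hasSum

theorem qPoch_zero (a q : ℂ) : qPoch a q 0 = 1 := Finset.prod_range_zero _

theorem qPoch_succ (a q : ℂ) (n : ℕ) : qPoch a q (n + 1) = qPoch a q n * (1 - a * q ^ n) :=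
  Finset.prod_range_succ _ n

theorem tendsto_qPoch_qPochInf (a : ℂ) {q : ℂ} (hq : ‖q‖ < 1) :
    Tendsto (qPoch a q) atTop (𝓝 (qPochInf a q)) :=
  (multipliable_one_sub_mul_pow_s17 a hq).hasProd.tendsto_prod_nat

noncomputable def qPochPair (a q : ℂ) (n : ℕ) : ℂ := qPoch a q n * qPoch (q / a) q n

theorem qPochPair_zero (a q : ℂ) : qPochPair a q 0 = 1 := by
  simp [qPochPair, qPoch_zero]

theorem qPochPair_succ (a q : ℂ) (n : ℕ) :
    qPochPair a q (n + 1) = qPochPair a q n * ((1 - a * q ^ n) * (1 - q / a * q ^ n)) := by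
  simp only [qPochPair, qPoch_succ]
  ring

theorem tendsto_qPochPair (a : ℂ) {q : ℂ} (hq : ‖q‖ < 1) :
    Tendsto (qPochPair a q) atTop (𝓝 (qPochInf a q * qPochInf (q / a) q)) :=
  (tendsto_qPoch_qPochInf a hq).mul (tendsto_qPoch_qPochInf (q / a) hq)

theorem qPochPair_summand_eq_sub_succ {y z : ℂ} (hy : y ≠ 0) (hz : z ≠ 0) {q : ℂ} {n : ℕ}
    (hC : (y - z) * (1 - q / (y * z)) ≠ 0) (hden : qPochPair z q (n + 1) ≠ 0) :
    qPochPair y q n * q ^ n / qPochPair z q (n + 1) =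
      qPochPair y q n / qPochPair z q n / ((y - z) * (1 - q / (y * z))) -
        qPochPair y q (n + 1) / qPochPair z q (n + 1) / ((y - z) * (1 - q / (y * z))) := by
  rw [qPochPair_succ] at hden
  obtain ⟨hZ, hfz⟩ := mul_ne_zero_iff.mp hden
  have hfactor : (1 - z * q ^ n) * (1 - q / z * q ^ n) - (1 - y * q ^ n) * (1 - q / y * q ^ n) =
      q ^ n * ((y - z) * (1 - q / (y * z))) := by
    field_simp
    ring
  rw [qPochPair_succ, qPochPair_succ, div_sub_div_same, eq_div_iff hC]
  generalize (1 - z * q ^ n) * (1 - q / z * q ^ n) = Fz at *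
  generalize (1 - y * q ^ n) * (1 - q / y * q ^ n) = Fy at *
  generalize (y - z) * (1 - q / (y * z)) = C at *
  field_simp
  linear_combination -qPochPair y q n * hfactor

theorem stmt_17 (q y z : ℂ) (hq : ‖q‖ < 1) (hyz : y * z ≠ 0) (hne : y ≠ z)
    (hq' : y * z ≠ q)
    (hden : ∀ n : ℕ, qPoch z q (n + 1) * qPoch (q / z) q (n + 1) ≠ 0)
    (hdenInf : qPochInf z q * qPochInf (q / z) q ≠ 0) :
    (∑' n : ℕ, qPoch y q n * qPoch (q / y) q n * q ^ n /
        (qPoch z q (n + 1) * qPoch (q / z) q (n + 1))) =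
      1 / (y * (1 - z / y) * (1 - q / (y * z))) +
        qPochInf y q * qPochInf (q / y) q /
          (z * (1 - y / z) * (1 - q / (y * z)) * qPochInf z q * qPochInf (q / z) q) := by
  obtain ⟨hy, hz⟩ := mul_ne_zero_iff.mp hyz
  have hC : (y - z) * (1 - q / (y * z)) ≠ 0 := by
    refine mul_ne_zero (sub_ne_zero.mpr hne) (sub_ne_zero.mpr fun h => hq' ?_)
    rw [eq_div_iff hyz, one_mul] at h
    exact h
  have hsummable : Summable fun n => qPochPair y q n * q ^ n / qPochPair z q (n + 1) := by
    simp_rw [mul_div_right_comm _ (q ^ _)]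
    exact summable_mul_pow_of_tendsto ((tendsto_qPochPair y hq).div
      ((tendsto_qPochPair z hq).comp (tendsto_add_atTop_nat 1)) hdenInf) hq
  have hsum := hsummable.hasSum_of_eq_sub_succ
    (fun n => qPochPair_summand_eq_sub_succ hy hz hC (hden n))
    (((tendsto_qPochPair y hq).div (tendsto_qPochPair z hq) hdenInf).div_const _)
  refine hsum.tsum_eq.trans ?_
  rw [qPochPair_zero, qPochPair_zero, div_one]
  field_simp
  ring
end
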